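/- arXiv:1611.04654 — 4 statements merged into one kernel-verified Lean document; each statement's English description precedes it below -/
import Mathlib

section
/- (Theorem 1, Hoeffding-type bound) For every n and every law μ_n of X on {−1,1}^n, the detection error probability satisfies P_e^{(n)} ≤ E[ exp( −((1−2p)²/(8(1−p)²)) · (√n X̄_n)² ) ], where the expectation is over X. -/
open Filter MeasureTheory ProbabilityTheory Real
open scoped BoundedContinuousFunction NNReal Topology

/-- The `±1` real value encoded by a Boolean sentiment (`true ↦ 1`, `false ↦ -1`). -/
noncomputable def pmOne (b : Bool) : ℝ := if b then 1 else -1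

/-- The sample average `X̄ₙ = (1/n) ∑ᵢ Xᵢ` of a sign vector. -/
noncomputable def sampleAvg {n : ℕ} (x : Fin n → Bool) : ℝ := (∑ i, pmOne (x i)) / n

/-- The conditional probability of observing `y` given true sentiments `x`:
independent flips, each with crossover probability `p`. -/
noncomputable def noiseW (p : ℝ) {n : ℕ} (x y : Fin n → Bool) : ℝ :=
  ∏ i, if y i = x i then 1 - p else p

/-- The majority detection error probability
`P_e^{(n)} = P(√n X̄ₙ · √n Ȳₙ < 0)`, where `X` has law `μ` on `{-1,1}ⁿ` and `Y`
is an independent-flip noisy observation of `X` with crossover probability `p`. -/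
noncomputable def errProb (p : ℝ) (n : ℕ) (μ : (Fin n → Bool) → ℝ) : ℝ :=
  ∑ x : Fin n → Bool, ∑ y : Fin n → Bool,
    if (Real.sqrt n * sampleAvg x) * (Real.sqrt n * sampleAvg y) < 0
      then μ x * noiseW p x y else 0


lemma taylor3 {u : ℝ} (hu : |u| ≤ 1) :
    Real.exp u ≤ 1 + u + u ^ 2 / 2 + 2 / 9 * |u| ^ 3 := by
  have h := Real.exp_bound hu (by norm_num : 0 < 3)
  have hs : ∑ m ∈ Finset.range 3, u ^ m / m.factorial = 1 + u + u ^ 2 / 2 := by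
    simp [Finset.sum_range_succ]
  rw [hs] at h
  have h2 := (abs_le.mp h).2
  have : ((3:ℕ).succ : ℝ) / ((3:ℕ).factorial * (3:ℕ)) = 2/9 := by norm_num [Nat.factorial]
  rw [this] at h2
  linarith

lemma hoeff {p : ℝ} (hp0 : 0 < p) (hp : p < 1/2) {t : ℝ}
    (ht : |t| ≤ (1 - 2*p) / (4 * (1-p)^2)) :
    (1-p) * Real.exp (-t) + p * Real.exp t
      ≤ Real.exp ((2*p - 1) * t + 2 * (1-p)^2 * t^2) := by
  have hp1 : (0:ℝ) < 1 - p := by linarith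
  have h2p : (0:ℝ) < 1 - 2*p := by linarith
  set A := |t| with hA
  have hA0 : 0 ≤ A := abs_nonneg t
  have hAt : t ≤ A := le_abs_self t
  have hAt' : -A ≤ t := neg_abs_le t
  have hA2 : A^2 = t^2 := sq_abs t
  have hTlt : A * (4 * (1-p)^2) ≤ 1 - 2*p := by
    rw [← le_div_iff₀ (by positivity)]; exact ht
  have h2le : 2*(1-p)*A ≤ 1 := by nlinarith
  have h1le : 2*p*A ≤ 1 := by nlinarith
  have e1 : |(-(2*p*t))| = 2*p*A := by
    rw [abs_neg, abs_mul, abs_of_pos (by linarith : (0:ℝ) < 2*p)]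
  have e2 : |2*(1-p)*t| = 2*(1-p)*A := by
    rw [abs_mul, abs_of_pos (by linarith : (0:ℝ) < 2*(1-p))]
  have t1 : Real.exp (-(2*p*t)) ≤ 1 + (-(2*p*t)) + (-(2*p*t))^2/2 + 2/9*(2*p*A)^3 := by
    have := taylor3 (u := -(2*p*t)) (by rw [e1]; linarith)
    rwa [e1] at this
  have t2 : Real.exp (2*(1-p)*t) ≤ 1 + 2*(1-p)*t + (2*(1-p)*t)^2/2 + 2/9*(2*(1-p)*A)^3 := by
    have := taylor3 (u := 2*(1-p)*t) (by rw [e2]; linarith)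
    rwa [e2] at this
  have h3 : 1 + 2*(1-p)^2*t^2 ≤ Real.exp (2*(1-p)^2*t^2) := by
    linarith [Real.add_one_le_exp (2*(1-p)^2*t^2)]
  have hm : 2 * (1 - p) * A ^ 2 * (A * (4 * (1 - p) ^ 2)) ≤ 2 * (1 - p) * A ^ 2 * (1 - 2 * p) :=
    mul_le_mul_of_nonneg_left hTlt (by positivity)
  have hpoly : (16/9)*p*(p^2+(1-p)^2) ≤ 8*(1-p)^2 := by
    nlinarith [mul_pos h2p (by linarith : (0:ℝ) < 3 - 2*p), sq_nonneg p, sq_nonneg (1-p),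
      mul_pos hp0 hp1]
  have hmul := mul_le_mul_of_nonneg_right hpoly
    (by positivity : (0:ℝ) ≤ (1-p)*A^3)
  have hcube : (16/9)*p*(1-p)*(p^2+(1-p)^2)*A^3 ≤ 2*(1-p)*(1-2*p)*A^2 := by
    nlinarith [hm, hmul]
  have hcube' : (16/9)*p*(1-p)*(p^2+(1-p)^2)*A^3 ≤ 2*(1-p)*(1-2*p)*t^2 := by
    calc (16/9)*p*(1-p)*(p^2+(1-p)^2)*A^3 ≤ 2*(1-p)*(1-2*p)*A^2 := hcube
    _ = 2*(1-p)*(1-2*p)*t^2 := by rw [hA2]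
  have k1 := mul_le_mul_of_nonneg_left t1 hp1.le
  have k2 := mul_le_mul_of_nonneg_left t2 hp0.le
  have key : (1-p) * Real.exp (-(2*p*t)) + p * Real.exp (2*(1-p)*t)
      ≤ Real.exp (2*(1-p)^2*t^2) := by
    linarith [k1, k2, h3, hcube']
  have l1 : Real.exp (-t) = Real.exp ((2*p-1)*t) * Real.exp (-(2*p*t)) := by
    rw [← Real.exp_add]; ring_nf
  have l2 : Real.exp t = Real.exp ((2*p-1)*t) * Real.exp (2*(1-p)*t) := by
    rw [← Real.exp_add]; ring_nf
  have expand : Real.exp ((2*p - 1) * t + 2 * (1-p)^2 * t^2)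
      = Real.exp ((2*p-1)*t) * Real.exp (2*(1-p)^2*t^2) := by
    rw [← Real.exp_add]
  rw [l1, l2, expand]
  have h := mul_le_mul_of_nonneg_left key (Real.exp_pos ((2*p-1)*t)).le
  linarith [h]

lemma pmOne_sq (b : Bool) : pmOne b ^ 2 = 1 := by cases b <;> norm_num [pmOne]
lemma abs_pmOne (b : Bool) : |pmOne b| = 1 := by cases b <;> norm_num [pmOne]

lemma perx {p : ℝ} (hp0 : 0 < p) (hp : p < 1/2) (n : ℕ) (x : Fin n → Bool) :
    (∑ y : Fin n → Bool,
        if (Real.sqrt n * sampleAvg x) * (Real.sqrt n * sampleAvg y) < 0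
          then noiseW p x y else 0)
      ≤ Real.exp (-(1 - 2*p)^2 / (8*(1-p)^2) * (Real.sqrt n * sampleAvg x)^2) := by
  have hp1 : (0:ℝ) < 1 - p := by linarith
  have h2p : (0:ℝ) < 1 - 2*p := by linarith
  rcases Nat.eq_zero_or_pos n with hn | hn
  · have hc : ((n:ℝ)) = 0 := by simp [hn]
    rw [Finset.sum_eq_zero]
    · exact (Real.exp_pos _).le
    · intro y _
      rw [if_neg]
      rw [hc, Real.sqrt_zero]
      norm_num
  · have hn' : (0:ℝ) < n := by exact_mod_cast hn
    have hn0 : (n:ℝ) ≠ 0 := ne_of_gt hn'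
    set S : ℝ := ∑ i, pmOne (x i) with hS
    set l : ℝ := (1-2*p)*S/(4*(1-p)^2*n) with hl
    have hSbound : |S| ≤ n := by
      calc |S| ≤ ∑ i, |pmOne (x i)| := Finset.abs_sum_le_sum_abs _ _
      _ = n := by simp [abs_pmOne]
    have hlbound : |l| ≤ (1-2*p)/(4*(1-p)^2) := by
      rw [hl, abs_div, abs_mul, abs_of_pos h2p,
        abs_of_pos (by positivity : (0:ℝ) < 4*(1-p)^2*n)]
      rw [div_le_div_iff₀ (by positivity) (by positivity)]
      have hmm := mul_le_mul_of_nonneg_left hSbound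
        (by positivity : (0:ℝ) ≤ (1-2*p)*(4*(1-p)^2))
      nlinarith [hmm]
    have hss : Real.sqrt n * Real.sqrt n = n := Real.mul_self_sqrt (by positivity)
    -- step 1 : pointwise indicator bound
    have step1 : ∀ y : Fin n → Bool,
        (if (Real.sqrt n * sampleAvg x) * (Real.sqrt n * sampleAvg y) < 0
          then noiseW p x y else 0)
        ≤ noiseW p x y * Real.exp (-(l * ∑ i, pmOne (y i))) := by
      intro y
      have hW : 0 ≤ noiseW p x y :=
        Finset.prod_nonneg fun i _ => by split <;> linarith
      split_ifs with h
      · nth_rewrite 1 [← mul_one (noiseW p x y)]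
        refine mul_le_mul_of_nonneg_left (Real.one_le_exp ?_) hW
        have hq : (Real.sqrt n * sampleAvg x) * (Real.sqrt n * sampleAvg y)
            = S * (∑ i, pmOne (y i)) / n := by
          simp only [sampleAvg, ← hS]
          rw [show Real.sqrt n * (S / n) * (Real.sqrt n * ((∑ i, pmOne (y i)) / n))
              = (Real.sqrt n * Real.sqrt n) * (S * (∑ i, pmOne (y i))) / ((n:ℝ) * n) from by
            ring, hss]
          field_simp
        rw [hq] at h
        have hSS : S * (∑ i, pmOne (y i)) < 0 := by
          by_contra hc
          push_neg at hc
          exact absurd (div_nonneg hc hn'.le) (not_le.mpr h)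
        have : -(l * ∑ i, pmOne (y i))
            = (1-2*p) * (-(S * ∑ i, pmOne (y i))) / (4*(1-p)^2*n) := by
          rw [hl]; ring
        rw [this]
        exact div_nonneg (mul_nonneg h2p.le (by linarith)) (by positivity)
      · exact mul_nonneg hW (Real.exp_pos _).le
    -- step 2 : factorization
    have step2 : (∑ y : Fin n → Bool, noiseW p x y * Real.exp (-(l * ∑ i, pmOne (y i))))
        = ∏ i, ((1-p) * Real.exp (-(l * pmOne (x i))) + p * Real.exp (l * pmOne (x i))) := by
      have hterm : ∀ y : Fin n → Bool,
          noiseW p x y * Real.exp (-(l * ∑ i, pmOne (y i)))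
          = ∏ i, ((if y i = x i then 1-p else p) * Real.exp (-(l * pmOne (y i)))) := by
        intro y
        rw [Finset.prod_mul_distrib]
        unfold noiseW
        congr 1
        rw [← Real.exp_sum]
        congr 1
        rw [Finset.mul_sum]
        simp
      simp_rw [hterm]
      rw [← Fintype.prod_sum (fun (i : Fin n) (b : Bool) =>
        (if b = x i then 1-p else p) * Real.exp (-(l * pmOne b)))]
      refine Finset.prod_congr rfl fun i _ => ?_
      rw [Fintype.sum_bool]
      cases hxi : x i <;> simp [pmOne] <;> try ring_nf
    -- step 3 : per-factor hoeffding bound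
    have step3 : (∏ i, ((1-p) * Real.exp (-(l * pmOne (x i))) + p * Real.exp (l * pmOne (x i))))
        ≤ ∏ i : Fin n, Real.exp ((2*p - 1) * (l * pmOne (x i))
            + 2 * (1-p)^2 * (l * pmOne (x i))^2) := by
      refine Finset.prod_le_prod (fun i _ => by positivity) (fun i _ => ?_)
      exact hoeff hp0 hp (by rw [abs_mul, abs_pmOne, mul_one]; exact hlbound)
    -- step 4 : compute the exponent
    have step4 : (∏ i : Fin n, Real.exp ((2*p - 1) * (l * pmOne (x i))
            + 2 * (1-p)^2 * (l * pmOne (x i))^2))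
        = Real.exp (-(1 - 2*p)^2 / (8*(1-p)^2) * (Real.sqrt n * sampleAvg x)^2) := by
      rw [← Real.exp_sum]
      congr 1
      have e1 : ∑ i : Fin n, ((2*p - 1) * (l * pmOne (x i))
            + 2 * (1-p)^2 * (l * pmOne (x i))^2)
          = (2*p - 1) * (l * S) + n * (2 * (1-p)^2 * l^2) := by
        have hterm : ∀ i : Fin n, (2*p-1)*(l*pmOne (x i)) + 2*(1-p)^2*(l*pmOne (x i))^2
            = (2*p-1)*l*pmOne (x i) + 2*(1-p)^2*l^2 := by
          intro i; rw [mul_pow, pmOne_sq, mul_one]; ring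
        rw [Finset.sum_congr rfl fun i _ => hterm i, Finset.sum_add_distrib, ← Finset.mul_sum,
          ← hS, Finset.sum_const, Finset.card_univ, Fintype.card_fin, nsmul_eq_mul]
        ring
      rw [e1]
      have e2 : (Real.sqrt n * sampleAvg x)^2 = S^2 / n := by
        simp only [sampleAvg, ← hS]
        rw [mul_pow, Real.sq_sqrt (by positivity : (0:ℝ) ≤ (n:ℝ))]
        field_simp
      rw [e2, hl]
      field_simp
      ring
    calc (∑ y : Fin n → Bool,
        if (Real.sqrt n * sampleAvg x) * (Real.sqrt n * sampleAvg y) < 0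
          then noiseW p x y else 0)
        ≤ ∑ y : Fin n → Bool, noiseW p x y * Real.exp (-(l * ∑ i, pmOne (y i))) :=
          Finset.sum_le_sum fun y _ => step1 y
      _ = _ := step2
      _ ≤ _ := step3
      _ = _ := step4

/-- **Theorem 1, Hoeffding-type bound.** For every `n` and every law `μ`
of `X` on `{-1,1}ⁿ`, the detection error probability satisfies
`P_e^{(n)} ≤ E[exp(-((1-2p)²/(8(1-p)²)) · (√n X̄ₙ)²)]`. -/
theorem errProb_le_hoeffding (p : ℝ) (hp0 : 0 < p) (hp : p < 1 / 2) (n : ℕ)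
    (μ : (Fin n → Bool) → ℝ) (hμ0 : ∀ x, 0 ≤ μ x) (hμ1 : ∑ x, μ x = 1) :
    errProb p n μ ≤ ∑ x : Fin n → Bool,
      μ x * Real.exp (-(1 - 2 * p) ^ 2 / (8 * (1 - p) ^ 2)
        * (Real.sqrt n * sampleAvg x) ^ 2) := by
  have key : ∀ x : Fin n → Bool,
      (∑ y : Fin n → Bool,
        if (Real.sqrt n * sampleAvg x) * (Real.sqrt n * sampleAvg y) < 0
          then noiseW p x y else 0)
      ≤ Real.exp (-(1 - 2 * p) ^ 2 / (8 * (1 - p) ^ 2) * (Real.sqrt n * sampleAvg x) ^ 2) := by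
    intro x
    have h := perx hp0 hp n x
    convert h using 3 <;> ring
  rw [errProb]
  have hsplit : ∀ x : Fin n → Bool,
      (∑ y : Fin n → Bool,
        if (Real.sqrt n * sampleAvg x) * (Real.sqrt n * sampleAvg y) < 0
          then μ x * noiseW p x y else 0)
      = μ x * ∑ y : Fin n → Bool,
        (if (Real.sqrt n * sampleAvg x) * (Real.sqrt n * sampleAvg y) < 0
          then noiseW p x y else 0) := by
    intro x
    rw [Finset.mul_sum]
    refine Finset.sum_congr rfl fun y _ => ?_
    split <;> simp
  rw [Finset.sum_congr rfl fun x _ => hsplit x]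
  exact Finset.sum_le_sum fun x _ => mul_le_mul_of_nonneg_left (key x) (hμ0 x)
end

section
/- (Theorem 4(a)) If for every B > 0 one has lim_{n→∞} P( |√n X̄_n| ≤ B ) = 0, then lim_{n→∞} P_e^{(n)} = 0. -/
open Filter MeasureTheory ProbabilityTheory Real
open scoped BoundedContinuousFunction NNReal Topology

/-- Sum over boolean vectors of a product factorizes. -/
lemma sum_prod_eq_prod_sum {n : ℕ} (f : Fin n → Bool → ℝ) :
    ∑ y : Fin n → Bool, ∏ i, f i (y i) = ∏ i, ∑ b, f i b := by
  have h := Finset.prod_univ_sum (fun _ : Fin n => (Finset.univ : Finset Bool)) f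
  rw [Fintype.piFinset_univ] at h
  exact h.symm

/-- Second moment of a sum of independent mean-zero variables. -/
lemma secondMoment {n : ℕ} (w d : Fin n → Bool → ℝ)
    (h1 : ∀ i, ∑ b, w i b = 1) (h2 : ∀ i, ∑ b, w i b * d i b = 0) :
    ∑ y : Fin n → Bool, (∏ i, w i (y i)) * (∑ i, d i (y i)) ^ 2
      = ∑ i, ∑ b, w i b * d i b ^ 2 := by
  have expand : ∀ y : Fin n → Bool,
      (∏ i, w i (y i)) * (∑ i, d i (y i)) ^ 2
        = ∑ i, ∑ j, (∏ k, w k (y k)) * (d i (y i) * d j (y j)) := by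
    intro y
    rw [sq, Finset.sum_mul_sum, Finset.mul_sum]
    exact Finset.sum_congr rfl fun i _ => by rw [Finset.mul_sum]
  simp_rw [expand]
  rw [Finset.sum_comm]
  refine Finset.sum_congr rfl fun i _ => ?_
  rw [Finset.sum_comm]
  refine (Finset.sum_eq_single i ?_ ?_).trans ?_
  · intro j _ hj
    have key : ∀ y : Fin n → Bool,
        (∏ k, w k (y k)) * (d i (y i) * d j (y j))
          = ∏ k, (fun k b => w k b * ((if k = i then d i b else 1) *
              (if k = j then d j b else 1))) k (y k) := by
      intro y
      simp only
      rw [Finset.prod_mul_distrib, Finset.prod_mul_distrib,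
        Finset.prod_ite_eq' Finset.univ i (fun k => d i (y k)),
        Finset.prod_ite_eq' Finset.univ j (fun k => d j (y k))]
      simp
    simp_rw [key]
    rw [sum_prod_eq_prod_sum (fun k b => w k b * ((if k = i then d i b else 1) *
              (if k = j then d j b else 1)))]
    apply Finset.prod_eq_zero (Finset.mem_univ i)
    simp only [if_pos rfl, if_neg (Ne.symm hj), mul_one]
    exact h2 i
  · simp
  · have key : ∀ y : Fin n → Bool,
        (∏ k, w k (y k)) * (d i (y i) * d i (y i))
          = ∏ k, (fun k b => w k b * (if k = i then d i b * d i b else 1)) k (y k) := by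
      intro y
      simp only
      rw [Finset.prod_mul_distrib,
        Finset.prod_ite_eq' Finset.univ i (fun k => d i (y k) * d i (y k))]
      simp
    simp_rw [key]
    rw [sum_prod_eq_prod_sum (fun k b => w k b * (if k = i then d i b * d i b else 1))]
    have hfac : ∀ k, (∑ b, w k b * (if k = i then d i b * d i b else 1))
        = if k = i then ∑ b, w i b * d i b ^ 2 else 1 := by
      intro k
      by_cases hk : k = i
      · subst hk; simp [sq]
      · simp only [if_neg hk, mul_one]
        exact h1 k
    rw [Finset.prod_congr rfl fun k _ => hfac k,
      Finset.prod_ite_eq' Finset.univ i (fun _ => ∑ b, w i b * d i b ^ 2)]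
    simp

lemma noiseW_nonneg (p : ℝ) (hp0 : 0 < p) (hp : p < 1 / 2) {n : ℕ} (x y : Fin n → Bool) :
    0 ≤ noiseW p x y := by
  apply Finset.prod_nonneg
  intro i _
  split <;> linarith

lemma noiseW_sum_one (p : ℝ) {n : ℕ} (x : Fin n → Bool) :
    ∑ y : Fin n → Bool, noiseW p x y = 1 := by
  unfold noiseW
  rw [sum_prod_eq_prod_sum (fun i b => if b = x i then 1 - p else p)]
  apply Finset.prod_eq_one
  intro i _
  cases hxi : x i <;> simp [hxi] <;> ring

/-- Chebyshev-type bound on the conditional error probability. -/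
lemma cond_err_bound (p : ℝ) (hp0 : 0 < p) (hp : p < 1 / 2) {n : ℕ} (x : Fin n → Bool)
    (B : ℝ) (hB : 0 < B) (hx : B < |Real.sqrt n * sampleAvg x|) :
    ∑ y : Fin n → Bool,
        (if (Real.sqrt n * sampleAvg x) * (Real.sqrt n * sampleAvg y) < 0
          then noiseW p x y else 0)
      ≤ 4 * p * (1 - p) / ((1 - 2 * p) ^ 2 * B ^ 2) := by
  set S : ℝ := ∑ i, pmOne (x i) with hS
  set m : ℝ := 1 - 2 * p with hm
  have hm0 : 0 < m := by rw [hm]; linarith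
  have hn : 0 < n := by
    rcases Nat.eq_zero_or_pos n with h | h
    · exfalso
      have h0 : sampleAvg x = 0 := by simp [sampleAvg, h]
      rw [h0, mul_zero, abs_zero] at hx
      linarith
    · exact h
  have hn0 : (0:ℝ) < n := by exact_mod_cast hn
  have hsq : Real.sqrt n * Real.sqrt n = (n:ℝ) := Real.mul_self_sqrt (le_of_lt hn0)
  have hsa : sampleAvg x = S / n := rfl
  have hA2 : (Real.sqrt n * sampleAvg x) ^ 2 = S ^ 2 / n := by
    rw [hsa, mul_pow, Real.sq_sqrt hn0.le, div_pow]
    field_simp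
  have hS2 : (n:ℝ) * B ^ 2 < S ^ 2 := by
    have h1 : B ^ 2 < (Real.sqrt n * sampleAvg x) ^ 2 := by
      have h2 : B ^ 2 < |Real.sqrt n * sampleAvg x| ^ 2 :=
        pow_lt_pow_left₀ hx hB.le (by norm_num)
      rwa [sq_abs] at h2
    rw [hA2, lt_div_iff₀ hn0] at h1
    linarith
  have hSpos : 0 < S ^ 2 := lt_of_le_of_lt (by positivity) hS2
  set w : Fin n → Bool → ℝ := fun i b => if b = x i then 1 - p else p with hw
  set d : Fin n → Bool → ℝ := fun i b => pmOne b - m * pmOne (x i) with hd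
  have h1 : ∀ i, ∑ b, w i b = 1 := by
    intro i; cases hxi : x i <;> simp [hw, hxi] <;> ring
  have h2 : ∀ i, ∑ b, w i b * d i b = 0 := by
    intro i; cases hxi : x i <;> simp [hw, hd, hxi, pmOne, hm] <;> ring
  have h3 : ∀ i, ∑ b, w i b * d i b ^ 2 = 4 * p * (1 - p) := by
    intro i; cases hxi : x i <;> simp [hw, hd, hxi, pmOne, hm] <;> ring
  have hM : ∑ y : Fin n → Bool, (∏ i, w i (y i)) * (∑ i, d i (y i)) ^ 2
      = n * (4 * p * (1 - p)) := by
    rw [secondMoment w d h1 h2]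
    calc ∑ i, ∑ b, w i b * d i b ^ 2 = ∑ _i : Fin n, (4 * p * (1 - p)) :=
          Finset.sum_congr rfl fun i _ => h3 i
      _ = n * (4 * p * (1 - p)) := by
          rw [Finset.sum_const, Finset.card_univ, Fintype.card_fin, nsmul_eq_mul]
  have hnoise : ∀ y : Fin n → Bool, noiseW p x y = ∏ i, w i (y i) := fun y => rfl
  have hdev : ∀ y : Fin n → Bool, ∑ i, d i (y i) = (∑ i, pmOne (y i)) - m * S := by
    intro y
    simp only [hd, Finset.sum_sub_distrib, ← Finset.mul_sum, hS]
  have hpt : ∀ y : Fin n → Bool,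
      (if (Real.sqrt n * sampleAvg x) * (Real.sqrt n * sampleAvg y) < 0
        then noiseW p x y else 0)
      ≤ noiseW p x y * (∑ i, d i (y i)) ^ 2 / (m ^ 2 * S ^ 2) := by
    intro y
    have hnw := noiseW_nonneg p hp0 hp x y
    by_cases hc : (Real.sqrt n * sampleAvg x) * (Real.sqrt n * sampleAvg y) < 0
    · rw [if_pos hc]
      set T : ℝ := ∑ i, pmOne (y i) with hT
      have hta : sampleAvg y = T / n := rfl
      have hST : S * T < 0 := by
        have heq : (Real.sqrt n * sampleAvg x) * (Real.sqrt n * sampleAvg y)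
            = S * T / n := by
          rw [hsa, hta]
          calc Real.sqrt n * (S / n) * (Real.sqrt n * (T / n))
              = (Real.sqrt n * Real.sqrt n) * (S * T) / (n * n) := by ring
            _ = (n : ℝ) * (S * T) / (n * n) := by rw [hsq]
            _ = S * T / n := by field_simp
        rw [heq] at hc
        by_contra hcon
        push_neg at hcon
        have : 0 ≤ S * T / n := div_nonneg hcon hn0.le
        linarith
      have hdevsq : m ^ 2 * S ^ 2 ≤ (∑ i, d i (y i)) ^ 2 := by
        rw [hdev y, ← hT]
        nlinarith [sq_nonneg T, mul_pos hm0 hm0]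
      rw [le_div_iff₀ (by positivity)]
      exact mul_le_mul_of_nonneg_left hdevsq hnw
    · rw [if_neg hc]
      positivity
  calc ∑ y : Fin n → Bool, (if (Real.sqrt n * sampleAvg x) * (Real.sqrt n * sampleAvg y) < 0
          then noiseW p x y else 0)
      ≤ ∑ y : Fin n → Bool, noiseW p x y * (∑ i, d i (y i)) ^ 2 / (m ^ 2 * S ^ 2) :=
        Finset.sum_le_sum fun y _ => hpt y
    _ = (∑ y : Fin n → Bool, (∏ i, w i (y i)) * (∑ i, d i (y i)) ^ 2) / (m ^ 2 * S ^ 2) := by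
        rw [← Finset.sum_div]
        rfl
    _ = n * (4 * p * (1 - p)) / (m ^ 2 * S ^ 2) := by rw [hM]
    _ ≤ 4 * p * (1 - p) / (m ^ 2 * B ^ 2) := by
        rw [div_le_div_iff₀ (by positivity) (by positivity)]
        have hC : 0 ≤ 4 * p * (1 - p) := by nlinarith
        have hkey := mul_le_mul_of_nonneg_left hS2.le
          (mul_nonneg hC (sq_nonneg m))
        nlinarith [hkey]
    _ = 4 * p * (1 - p) / ((1 - 2 * p) ^ 2 * B ^ 2) := by rw [hm]

/-- **Theorem 4(a).** -/
theorem errProb_tendsto_zero (p : ℝ) (hp0 : 0 < p) (hp : p < 1 / 2)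
    (μ : (n : ℕ) → (Fin n → Bool) → ℝ)
    (hμ0 : ∀ n x, 0 ≤ μ n x) (hμ1 : ∀ n, ∑ x, μ n x = 1)
    (hconc : ∀ B : ℝ, 0 < B →
      Tendsto (fun n => ∑ x : Fin n → Bool,
          if |Real.sqrt n * sampleAvg x| ≤ B then μ n x else 0)
        atTop (𝓝 0)) :
    Tendsto (fun n => errProb p n (μ n)) atTop (𝓝 0) := by
  set K : ℝ := 4 * p * (1 - p) / (1 - 2 * p) ^ 2 with hK
  have hKpos : 0 < K := by
    apply div_pos (by nlinarith) (pow_pos (by linarith) 2)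
  -- notation for the conditional error probability
  have e_nonneg : ∀ (n : ℕ) (x : Fin n → Bool),
      0 ≤ ∑ y : Fin n → Bool,
        (if (Real.sqrt n * sampleAvg x) * (Real.sqrt n * sampleAvg y) < 0
          then noiseW p x y else 0) := by
    intro n x
    apply Finset.sum_nonneg
    intro y _
    split
    · exact noiseW_nonneg p hp0 hp x y
    · exact le_refl 0
  have e_le_one : ∀ (n : ℕ) (x : Fin n → Bool),
      (∑ y : Fin n → Bool,
        (if (Real.sqrt n * sampleAvg x) * (Real.sqrt n * sampleAvg y) < 0
          then noiseW p x y else 0)) ≤ 1 := by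
    intro n x
    calc (∑ y : Fin n → Bool,
        (if (Real.sqrt n * sampleAvg x) * (Real.sqrt n * sampleAvg y) < 0
          then noiseW p x y else 0))
        ≤ ∑ y : Fin n → Bool, noiseW p x y := by
          apply Finset.sum_le_sum
          intro y _
          split
          · exact le_refl _
          · exact noiseW_nonneg p hp0 hp x y
      _ = 1 := noiseW_sum_one p x
  -- errProb as a μ-average of conditional error probabilities
  have errProb_eq : ∀ n, errProb p n (μ n)
      = ∑ x : Fin n → Bool, μ n x * ∑ y : Fin n → Bool,
          (if (Real.sqrt n * sampleAvg x) * (Real.sqrt n * sampleAvg y) < 0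
            then noiseW p x y else 0) := by
    intro n
    unfold errProb
    refine Finset.sum_congr rfl fun x _ => ?_
    rw [Finset.mul_sum]
    refine Finset.sum_congr rfl fun y _ => ?_
    rw [mul_ite, mul_zero]
  -- the main estimate
  have main : ∀ (B : ℝ), 0 < B → ∀ n, errProb p n (μ n)
      ≤ (∑ x : Fin n → Bool, if |Real.sqrt n * sampleAvg x| ≤ B then μ n x else 0)
        + K / B ^ 2 := by
    intro B hB n
    rw [errProb_eq n]
    have hbd : ∀ x : Fin n → Bool,
        μ n x * (∑ y : Fin n → Bool,
          (if (Real.sqrt n * sampleAvg x) * (Real.sqrt n * sampleAvg y) < 0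
            then noiseW p x y else 0))
        ≤ (if |Real.sqrt n * sampleAvg x| ≤ B then μ n x else 0) + μ n x * (K / B ^ 2) := by
      intro x
      by_cases hxB : |Real.sqrt n * sampleAvg x| ≤ B
      · rw [if_pos hxB]
        have := mul_le_mul_of_nonneg_left (e_le_one n x) (hμ0 n x)
        have h2 : 0 ≤ μ n x * (K / B ^ 2) :=
          mul_nonneg (hμ0 n x) (div_nonneg hKpos.le (sq_nonneg B))
        linarith [this]
      · rw [if_neg hxB]
        push_neg at hxB
        have hce := cond_err_bound p hp0 hp x B hB hxB
        have : μ n x * (∑ y : Fin n → Bool,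
            (if (Real.sqrt n * sampleAvg x) * (Real.sqrt n * sampleAvg y) < 0
              then noiseW p x y else 0))
            ≤ μ n x * (4 * p * (1 - p) / ((1 - 2 * p) ^ 2 * B ^ 2)) :=
          mul_le_mul_of_nonneg_left hce (hμ0 n x)
        have heq : 4 * p * (1 - p) / ((1 - 2 * p) ^ 2 * B ^ 2) = K / B ^ 2 := by
          rw [hK]; field_simp
        rw [heq] at this
        linarith
    calc ∑ x : Fin n → Bool, μ n x * (∑ y : Fin n → Bool,
          (if (Real.sqrt n * sampleAvg x) * (Real.sqrt n * sampleAvg y) < 0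
            then noiseW p x y else 0))
        ≤ ∑ x : Fin n → Bool, ((if |Real.sqrt n * sampleAvg x| ≤ B then μ n x else 0)
            + μ n x * (K / B ^ 2)) := Finset.sum_le_sum fun x _ => hbd x
      _ = (∑ x : Fin n → Bool, if |Real.sqrt n * sampleAvg x| ≤ B then μ n x else 0)
            + (∑ x : Fin n → Bool, μ n x) * (K / B ^ 2) := by
          rw [Finset.sum_add_distrib, Finset.sum_mul]
      _ = _ := by rw [hμ1 n, one_mul]
  have errProb_nonneg : ∀ n, 0 ≤ errProb p n (μ n) := by
    intro n
    rw [errProb_eq n]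
    exact Finset.sum_nonneg fun x _ => mul_nonneg (hμ0 n x) (e_nonneg n x)
  -- conclude
  rw [Metric.tendsto_atTop]
  intro ε hε
  have h2K : 0 < 2 * K / ε := div_pos (by linarith) hε
  set B : ℝ := Real.sqrt (2 * K / ε) with hBdef
  have hB2 : B ^ 2 = 2 * K / ε := Real.sq_sqrt h2K.le
  have hBpos : 0 < B := Real.sqrt_pos.mpr h2K
  have hKB : K / B ^ 2 = ε / 2 := by
    rw [hB2]
    field_simp
  have hc := hconc B hBpos
  rw [Metric.tendsto_atTop] at hc
  obtain ⟨N, hN⟩ := hc (ε / 2) (by linarith)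
  refine ⟨N, fun n hn => ?_⟩
  have h1 := hN n hn
  rw [Real.dist_eq, sub_zero] at h1 ⊢
  have hsum_nonneg : 0 ≤ ∑ x : Fin n → Bool,
      if |Real.sqrt n * sampleAvg x| ≤ B then μ n x else 0 := by
    apply Finset.sum_nonneg
    intro x _
    split
    · exact hμ0 n x
    · exact le_refl 0
  rw [abs_of_nonneg hsum_nonneg] at h1
  rw [abs_of_nonneg (errProb_nonneg n)]
  have := main B hBpos n
  rw [hKB] at this
  linarith
end

section
/- (Laplace approximation, Lemma 2) Let g : ℝ → ℝ be continuous, suppose g attains its global maximum at a unique point s* with sup_{|s−s*| ≥ δ} g(s) < g(s*) for every δ > 0, suppose g is twice differentiable at s* with g''(s*) < 0, and suppose ∫_{−∞}^{∞} e^{g(s)} ds < ∞. Then lim_{n→∞} (1/n) log ∫_{−∞}^{∞} exp( n g(s) ) ds = g(s*) = max_s g(s). -/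
open Filter MeasureTheory Real
open scoped Topology

/-- **Laplace approximation, Lemma 2.** Let `g : ℝ → ℝ` be continuous,
attaining its global maximum at a unique point `s⋆`, with
`sup_{|s - s⋆| ≥ δ} g(s) < g(s⋆)` for every `δ > 0`; suppose `g` is twice differentiable
at `s⋆` (differentiable near `s⋆`, and its derivative differentiable at `s⋆`) with
`g''(s⋆) < 0`, and suppose `∫ e^{g(s)} ds < ∞`. Then
`lim_{n→∞} (1/n) log ∫ exp(n g(s)) ds = g(s⋆) = max_s g(s)`. -/
theorem laplace_approximation (g : ℝ → ℝ) (hg : Continuous g) (sstar : ℝ)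
    (hmax : ∀ s, s ≠ sstar → g s < g sstar)
    (hsup : ∀ δ : ℝ, 0 < δ → sSup (g '' {s : ℝ | δ ≤ |s - sstar|}) < g sstar)
    (hdiff : ∀ᶠ s in 𝓝 sstar, DifferentiableAt ℝ g s)
    (g2 : ℝ) (hg2 : HasDerivAt (deriv g) g2 sstar) (hg2neg : g2 < 0)
    (hint : Integrable fun s : ℝ => Real.exp (g s)) :
    Tendsto (fun n : ℕ => (n : ℝ)⁻¹ * Real.log (∫ s : ℝ, Real.exp (n * g s)))
      atTop (𝓝 (g sstar)) ∧
    g sstar = ⨆ s : ℝ, g s := by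
  set M := g sstar with hM
  have hle : ∀ s, g s ≤ M := by
    intro s
    rcases eq_or_ne s sstar with h | h
    · rw [h]
    · exact (hmax s h).le
  -- integrability of exp (n * g) for n ≥ 1, with bound
  have key : ∀ n : ℕ, 1 ≤ n → Integrable (fun s : ℝ => Real.exp (n * g s)) ∧
      ∫ s : ℝ, Real.exp (n * g s) ≤ Real.exp (((n : ℝ) - 1) * M) * ∫ s : ℝ, Real.exp (g s) := by
    intro n hn
    have hn1 : (1 : ℝ) ≤ (n : ℝ) := by exact_mod_cast hn
    have hbound : ∀ s, Real.exp ((n : ℝ) * g s) ≤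
        Real.exp (((n : ℝ) - 1) * M) * Real.exp (g s) := by
      intro s
      rw [← Real.exp_add]
      apply Real.exp_le_exp.2
      nlinarith [mul_le_mul_of_nonneg_left (hle s) (sub_nonneg.2 hn1)]
    have hmeas : AEStronglyMeasurable (fun s : ℝ => Real.exp ((n : ℝ) * g s)) volume :=
      (Real.continuous_exp.comp ((continuous_const.mul hg))).aestronglyMeasurable
    have hintn : Integrable (fun s : ℝ => Real.exp ((n : ℝ) * g s)) := by
      refine (hint.const_mul (Real.exp (((n : ℝ) - 1) * M))).mono' hmeas ?_
      filter_upwards with s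
      rw [Real.norm_eq_abs, abs_of_pos (Real.exp_pos _)]
      exact hbound s
    refine ⟨hintn, ?_⟩
    calc ∫ s : ℝ, Real.exp ((n : ℝ) * g s)
        ≤ ∫ s : ℝ, Real.exp (((n : ℝ) - 1) * M) * Real.exp (g s) :=
          integral_mono hintn (hint.const_mul _) hbound
      _ = Real.exp (((n : ℝ) - 1) * M) * ∫ s : ℝ, Real.exp (g s) := integral_const_mul _ _
  have hC : 0 < ∫ s : ℝ, Real.exp (g s) := integral_exp_pos hint
  constructor
  · rw [tendsto_order]
    constructor
    · -- lower bound
      intro b hb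
      set ε := (M - b) / 2 with hε
      have hεpos : 0 < ε := by simp [hε]; linarith
      -- find a neighborhood where g > M - ε
      have hcont : ∀ᶠ s in 𝓝 sstar, M - ε < g s :=
        (hg.continuousAt (x := sstar)) (Ioi_mem_nhds (by linarith : M - ε < g sstar))
      rw [Metric.eventually_nhds_iff] at hcont
      obtain ⟨δ, hδpos, hδ⟩ := hcont
      set I : Set ℝ := Set.Ioo (sstar - δ) (sstar + δ) with hI
      have hvol : (volume I).toReal = 2 * δ := by
        rw [hI, Real.volume_Ioo, ENNReal.toReal_ofReal (by linarith)]
        ring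
      have hvolpos : (0:ℝ) < (volume I).toReal := by rw [hvol]; linarith
      have hlower : ∀ n : ℕ, 1 ≤ n →
          Real.exp ((n : ℝ) * (M - ε)) * (2 * δ) ≤ ∫ s : ℝ, Real.exp ((n : ℝ) * g s) := by
        intro n hn
        obtain ⟨hintn, -⟩ := key n hn
        have hnn : (0:ℝ) ≤ (n:ℝ) := Nat.cast_nonneg n
        have h1 : Real.exp ((n : ℝ) * (M - ε)) * (volume I).toReal ≤
            ∫ s in I, Real.exp ((n : ℝ) * g s) := by
          refine setIntegral_ge_of_const_le_real measurableSet_Ioo ?_ ?_ hintn.integrableOn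
          · rw [hI, Real.volume_Ioo]; exact ENNReal.ofReal_ne_top
          · intro x hx
            apply Real.exp_le_exp.2
            have hx' : dist x sstar < δ := by
              rw [Real.dist_eq, abs_sub_lt_iff]
              constructor <;> [skip; skip] <;> · simp [hI, Set.mem_Ioo] at hx; linarith
            exact mul_le_mul_of_nonneg_left (hδ hx').le hnn
        have h2 : ∫ s in I, Real.exp ((n : ℝ) * g s) ≤ ∫ s : ℝ, Real.exp ((n : ℝ) * g s) :=
          setIntegral_le_integral hintn (Filter.Eventually.of_forall fun s => (Real.exp_pos _).le)
        rw [← hvol]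
        linarith
      have hlim : Tendsto (fun n : ℕ => (M - ε) + (n : ℝ)⁻¹ * Real.log (2 * δ))
          atTop (𝓝 ((M - ε) + 0 * Real.log (2 * δ))) :=
        tendsto_const_nhds.add ((tendsto_inv_atTop_nhds_zero_nat (𝕜 := ℝ)).mul tendsto_const_nhds)
      simp only [zero_mul, add_zero] at hlim
      have hbε : b < M - ε := by rw [hε]; linarith
      filter_upwards [hlim.eventually_const_lt hbε, eventually_ge_atTop 1] with n hn hn1
      have hnpos : (0 : ℝ) < n := by exact_mod_cast hn1
      have hposc : (0:ℝ) < Real.exp ((n : ℝ) * (M - ε)) * (2 * δ) := by positivity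
      have hlog : Real.log (Real.exp ((n : ℝ) * (M - ε)) * (2 * δ)) ≤
          Real.log (∫ s : ℝ, Real.exp ((n : ℝ) * g s)) :=
        Real.log_le_log hposc (hlower n hn1)
      rw [Real.log_mul (Real.exp_pos _).ne' (by positivity), Real.log_exp] at hlog
      have := mul_le_mul_of_nonneg_left hlog (inv_nonneg.2 hnpos.le)
      have heq : (n : ℝ)⁻¹ * ((n : ℝ) * (M - ε) + Real.log (2 * δ)) =
          (M - ε) + (n : ℝ)⁻¹ * Real.log (2 * δ) := by field_simp
      rw [heq] at this
      linarith
    · -- upper bound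
      intro b hb
      have hu : Tendsto (fun n : ℕ => M - (n : ℝ)⁻¹ * M + (n : ℝ)⁻¹ * Real.log (∫ s : ℝ, Real.exp (g s)))
          atTop (𝓝 (M - 0 * M + 0 * Real.log (∫ s : ℝ, Real.exp (g s)))) := by
        exact (tendsto_const_nhds.sub ((tendsto_inv_atTop_nhds_zero_nat (𝕜 := ℝ)).mul tendsto_const_nhds)).add
          ((tendsto_inv_atTop_nhds_zero_nat (𝕜 := ℝ)).mul tendsto_const_nhds)
      simp only [zero_mul, sub_zero, add_zero] at hu
      have := hu.eventually_lt_const hb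
      filter_upwards [this, eventually_ge_atTop 1] with n hn hn1
      have hnpos : (0 : ℝ) < n := by exact_mod_cast hn1
      obtain ⟨hintn, hbd⟩ := key n hn1
      have hpos : 0 < ∫ s : ℝ, Real.exp ((n : ℝ) * g s) := integral_exp_pos hintn
      have hlog : Real.log (∫ s : ℝ, Real.exp ((n : ℝ) * g s)) ≤
          ((n : ℝ) - 1) * M + Real.log (∫ s : ℝ, Real.exp (g s)) := by
        calc Real.log (∫ s : ℝ, Real.exp ((n : ℝ) * g s))
            ≤ Real.log (Real.exp (((n : ℝ) - 1) * M) * ∫ s : ℝ, Real.exp (g s)) :=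
              Real.log_le_log hpos hbd
          _ = ((n : ℝ) - 1) * M + Real.log (∫ s : ℝ, Real.exp (g s)) := by
              rw [Real.log_mul (Real.exp_pos _).ne' hC.ne', Real.log_exp]
      have : (n : ℝ)⁻¹ * Real.log (∫ s : ℝ, Real.exp ((n : ℝ) * g s)) ≤
          M - (n : ℝ)⁻¹ * M + (n : ℝ)⁻¹ * Real.log (∫ s : ℝ, Real.exp (g s)) := by
        have h2 := mul_le_mul_of_nonneg_left hlog (inv_nonneg.2 hnpos.le)
        calc (n : ℝ)⁻¹ * Real.log (∫ s : ℝ, Real.exp ((n : ℝ) * g s))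
            ≤ (n : ℝ)⁻¹ * (((n : ℝ) - 1) * M + Real.log (∫ s : ℝ, Real.exp (g s))) := h2
          _ = M - (n : ℝ)⁻¹ * M + (n : ℝ)⁻¹ * Real.log (∫ s : ℝ, Real.exp (g s)) := by
              field_simp
      calc (n : ℝ)⁻¹ * Real.log (∫ s : ℝ, Real.exp ((n : ℝ) * g s)) ≤ _ := this
        _ < b := hn
  · refine le_antisymm (le_ciSup ⟨M, ?_⟩ sstar) (ciSup_le hle)
    rintro x ⟨s, rfl⟩
    exact hle s
end

section
/- (Properties of the Curie–Weiss rate function) Define f(θ, s) = log cosh(2√θ s) − s² for θ > 0 and s ∈ ℝ, and let F(θ) = sup_{s ∈ ℝ} f(θ, s). Then: (i) F(θ) = 0 for all 0 < θ ≤ 1/2; and (ii) F is strictly increasing on (1/2, ∞); in particular, for every θ > 1/2 and every c with 0 < c ≤ θ − 1/2, F(θ) > F(θ − c) whenever θ − c > 1/2, and F(θ) > 0 = F(θ − c) whenever θ − c ≤ 1/2. -/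
open Real

/-- The Curie–Weiss rate function `f(θ, s) = log cosh(2√θ s) - s²`. -/
noncomputable def fCW (θ s : ℝ) : ℝ := Real.log (Real.cosh (2 * Real.sqrt θ * s)) - s ^ 2

/-- `F(θ) = sup_{s ∈ ℝ} f(θ, s)`. -/
noncomputable def FCW (θ : ℝ) : ℝ := ⨆ s : ℝ, fCW θ s

/-!
From `cosh x ≤ exp (x² / 2)` we get `f(θ, s) ≤ (2θ - 1) s²`, so `F(θ) = 0` for `θ ≤ 1/2`; for
`θ > 1/2`, `cosh x ≥ 1 + x² / 2` makes `f(θ, s) > 0` for small `s ≠ 0`. Rescaling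
`s ↦ √(θ₁/θ₂) s` turns `f(θ₁, s)` into `f(θ₁, s) + (1 - θ₁/θ₂) s²`, and since `s²` dominates
`f(θ₁, s) / (2θ₁)`, this gives `F(θ₂) ≥ (1 + (θ₂ - θ₁) / (2θ₁θ₂)) F(θ₁)`, which is a strict
increase once `F(θ₁) > 0`.
-/

namespace Real

lemma cosh_le_exp_abs (x : ℝ) : cosh x ≤ exp |x| := by
  rw [← cosh_abs, cosh_eq]
  linarith [exp_le_exp.2 (neg_le_self (abs_nonneg x))]

lemma log_cosh_le_abs (x : ℝ) : log (cosh x) ≤ |x| :=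
  (log_le_iff_le_exp (cosh_pos x)).2 (cosh_le_exp_abs x)

lemma log_cosh_le_sq_div_two (x : ℝ) : log (cosh x) ≤ x ^ 2 / 2 :=
  (log_le_iff_le_exp (cosh_pos x)).2 (cosh_le_exp_half_sq x)

lemma one_add_sq_div_two_le_cosh (x : ℝ) : 1 + x ^ 2 / 2 ≤ cosh x := by
  have h := sum_le_hasSum (Finset.range 2) (fun n _ => by rw [pow_mul]; positivity) (hasSum_cosh x)
  norm_num [Finset.sum_range_succ] at h
  linarith

end Real

lemma fCW_le_mul_sq {θ : ℝ} (hθ : 0 ≤ θ) (s : ℝ) : fCW θ s ≤ (2 * θ - 1) * s ^ 2 := by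
  have h := Real.log_cosh_le_sq_div_two (2 * √θ * s)
  rw [mul_pow, mul_pow, sq_sqrt hθ] at h
  rw [fCW]
  linarith

lemma fCW_le {θ : ℝ} (hθ : 0 ≤ θ) (s : ℝ) : fCW θ s ≤ θ := by
  have h := Real.log_cosh_le_abs (2 * √θ * s)
  rw [abs_mul, abs_of_nonneg (by positivity : 0 ≤ 2 * √θ)] at h
  have hsq : 0 ≤ (|s| - √θ) ^ 2 := sq_nonneg _
  rw [sub_sq, sq_abs, sq_sqrt hθ] at hsq
  rw [fCW]
  linarith

lemma fCW_zero (θ : ℝ) : fCW θ 0 = 0 := by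
  simp [fCW]

lemma le_FCW {θ : ℝ} (hθ : 0 ≤ θ) (s : ℝ) : fCW θ s ≤ FCW θ :=
  le_ciSup ⟨θ, Set.forall_mem_range.2 (fCW_le hθ)⟩ s

lemma FCW_nonneg {θ : ℝ} (hθ : 0 ≤ θ) : 0 ≤ FCW θ :=
  fCW_zero θ ▸ le_FCW hθ 0

lemma FCW_eq_zero {θ : ℝ} (hθ : 0 ≤ θ) (hθ' : θ ≤ 1 / 2) : FCW θ = 0 :=
  (ciSup_le fun s => (fCW_le_mul_sq hθ s).trans
    (mul_nonpos_of_nonpos_of_nonneg (by linarith) (sq_nonneg s))).antisymm (FCW_nonneg hθ)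

lemma fCW_pos {θ s : ℝ} (hθ : 0 ≤ θ) (hs : s ≠ 0) (hθs : 2 * θ * s ^ 2 < 2 * θ - 1) :
    0 < fCW θ s := by
  set y := 2 * θ * s ^ 2
  have hy : 0 ≤ y := by positivity
  have hcosh : 1 + y ≤ cosh (2 * √θ * s) := by
    have h := Real.one_add_sq_div_two_le_cosh (2 * √θ * s)
    rwa [mul_pow, mul_pow, sq_sqrt hθ, show (2 : ℝ) ^ 2 * θ * s ^ 2 / 2 = y by ring] at h
  have hlog : y / (1 + y) ≤ log (cosh (2 * √θ * s)) := by
    calc y / (1 + y) = 1 - (1 + y)⁻¹ := by field_simp; ring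
      _ ≤ log (1 + y) := one_sub_inv_le_log_of_pos (by positivity)
      _ ≤ _ := log_le_log (by positivity) hcosh
  have hkey : s ^ 2 < y / (1 + y) := by
    rw [lt_div_iff₀ (by positivity)]
    nlinarith [sq_pos_of_ne_zero hs]
  rw [fCW]
  linarith

lemma FCW_pos {θ : ℝ} (hθ : 1 / 2 < θ) : 0 < FCW θ := by
  set s := √((2 * θ - 1) / (4 * θ))
  have hs : s ^ 2 = (2 * θ - 1) / (4 * θ) := sq_sqrt (by apply div_nonneg <;> linarith)
  have hs0 : s ≠ 0 := by
    rw [← sq_pos_iff, hs]; apply div_pos <;> linarith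
  refine (fCW_pos (by linarith) hs0 ?_).trans_le (le_FCW (by linarith) s)
  rw [hs]
  field_simp
  linarith

lemma fCW_sqrt_div_mul {θ₁ θ₂ : ℝ} (hθ₁ : 0 ≤ θ₁) (hθ₂ : 0 < θ₂) (s : ℝ) :
    fCW θ₂ (√(θ₁ / θ₂) * s) = fCW θ₁ s + (1 - θ₁ / θ₂) * s ^ 2 := by
  have h : √θ₂ ≠ 0 := (sqrt_pos.2 hθ₂).ne'
  rw [fCW, fCW, sqrt_div hθ₁, mul_pow, div_pow, sq_sqrt hθ₁, sq_sqrt hθ₂.le,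
    show 2 * √θ₂ * (√θ₁ / √θ₂ * s) = 2 * √θ₁ * s by field_simp]
  ring

-- Since `fCW θ₁ s ≤ 2 θ₁ s²`, the gain `(1 - θ₁ / θ₂) s²` from rescaling is at least
-- `(θ₂ - θ₁) / (2 θ₁ θ₂) * fCW θ₁ s`.
lemma mul_FCW_le {θ₁ θ₂ : ℝ} (hθ₁ : 0 < θ₁) (h : θ₁ ≤ θ₂) :
    (1 + (θ₂ - θ₁) / (2 * θ₁ * θ₂)) * FCW θ₁ ≤ FCW θ₂ := by
  have hθ₂ : 0 < θ₂ := hθ₁.trans_le h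
  have hk : 0 ≤ (θ₂ - θ₁) / (2 * θ₁ * θ₂) := div_nonneg (by linarith) (by positivity)
  rw [FCW, Real.mul_iSup_of_nonneg (by linarith)]
  refine ciSup_le fun s => ?_
  rcases le_or_gt (fCW θ₁ s) 0 with hf | hf
  · exact (mul_nonpos_of_nonneg_of_nonpos (by linarith) hf).trans (FCW_nonneg hθ₂.le)
  refine le_trans ?_ (le_FCW hθ₂.le (√(θ₁ / θ₂) * s))
  rw [fCW_sqrt_div_mul hθ₁.le hθ₂]
  have hs : fCW θ₁ s ≤ 2 * θ₁ * s ^ 2 := by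
    nlinarith [fCW_le_mul_sq hθ₁.le s, sq_nonneg s]
  have : (θ₂ - θ₁) / (2 * θ₁ * θ₂) * fCW θ₁ s ≤ (1 - θ₁ / θ₂) * s ^ 2 := by
    calc (θ₂ - θ₁) / (2 * θ₁ * θ₂) * fCW θ₁ s
        ≤ (θ₂ - θ₁) / (2 * θ₁ * θ₂) * (2 * θ₁ * s ^ 2) := mul_le_mul_of_nonneg_left hs hk
      _ = (1 - θ₁ / θ₂) * s ^ 2 := by field_simp
  linarith

lemma FCW_strictMonoOn : StrictMonoOn FCW (Set.Ioi (1 / 2 : ℝ)) := by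
  intro θ₁ (h₁ : 1 / 2 < θ₁) θ₂ _ hlt
  have hk : 0 < (θ₂ - θ₁) / (2 * θ₁ * θ₂) :=
    div_pos (by linarith) (mul_pos (by linarith) (by linarith))
  nlinarith [FCW_pos h₁, mul_FCW_le (by linarith) hlt.le]

/-- **Properties of the Curie–Weiss rate function.**
(i) `F(θ) = 0` for all `0 < θ ≤ 1/2`; (ii) `F` is strictly increasing on `(1/2, ∞)`;
in particular, for every `θ > 1/2` and every `c` with `0 < c ≤ θ - 1/2`, one has
`F(θ) > F(θ - c)` whenever `θ - c > 1/2`, and `F(θ) > 0 = F(θ - c)` whenever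
`θ - c ≤ 1/2`. -/
theorem curieWeiss_rate_function_props :
    (∀ θ : ℝ, 0 < θ → θ ≤ 1 / 2 → FCW θ = 0) ∧
    StrictMonoOn FCW (Set.Ioi (1 / 2 : ℝ)) ∧
    (∀ θ : ℝ, 1 / 2 < θ → ∀ c : ℝ, 0 < c → c ≤ θ - 1 / 2 →
      (1 / 2 < θ - c → FCW (θ - c) < FCW θ) ∧
      (θ - c ≤ 1 / 2 → FCW (θ - c) = 0 ∧ 0 < FCW θ)) := by
  refine ⟨fun θ hθ hθ' => FCW_eq_zero hθ.le hθ', FCW_strictMonoOn, fun θ hθ c _ hcθ => ⟨?_, ?_⟩⟩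
  · exact fun h => FCW_strictMonoOn h hθ (by linarith)
  · exact fun h => ⟨FCW_eq_zero (by linarith) h, FCW_pos hθ⟩
end
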